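/- Let S and T be Lawvere theories with distinguished objects s and t respectively, and let Y_T : T^op ⥤ AlgT be the restricted coYoneda embedding. The assignment Φ ↦ Φ^op ⋙ Y_T defines an essentially bijective correspondence between finite-product-preserving functors Φ : S → T with Φ(s) ≅ t (taken up to natural isomorphism) and finite-coproduct-preserving functors A : S^op ⥤ AlgT with A(s) isomorphic to the corepresentable functor Hom_T(t, −), i.e. to the free T-algebra on one generator (taken up to natural isomorphism). In particular, every internal S-coalgebra structure on the free T-algebra on one generator arises from a unique-up-to-isomorphism theory morphism S → T. -/

import Mathlib

universe u

open CategoryTheory Limits Opposite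

/-- The category of `T`-algebras: the full subcategory of `T ⥤ Type u` consisting of the
finite-product-preserving functors. -/
abbrev LawvereAlgCat (T : Type u) [SmallCategory T] :=
  ObjectProperty.FullSubcategory (fun F : T ⥤ Type u => PreservesFiniteProducts F)

/-- The restricted coYoneda embedding `Tᵒᵖ ⥤ AlgCat T`, sending `t` to `Hom_T(t, -)`. -/
noncomputable def coYon (T : Type u) [SmallCategory T] : Tᵒᵖ ⥤ LawvereAlgCat T :=
  ObjectProperty.lift _ coyoneda (fun _ => inferInstance)

/-!
Since a `T`-algebra `G` preserves finite products, maps `Y_T x ⟶ G` correspond by Yoneda to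
elements of `G x`, so `Y_T` turns finite products of `T` into coproducts of algebras; hence
`Φ.op ⋙ Y_T` preserves finite coproducts whenever `Φ` preserves finite products. Conversely, if
`A` preserves finite coproducts and `A s ≅ Y_T t`, then `A (sⁿ) ≅ ∐ A s ≅ ∐ Y_T t ≅ Y_T (tⁿ)`, so
`A` lands in the essential image of the fully faithful `Y_T` and lifts along it to a functor
`Sᵒᵖ ⥤ Tᵒᵖ`, which preserves finite coproducts because `Y_T` reflects them. Full faithfulness of
`Y_T` also gives essential injectivity.
-/

namespace CategoryTheory.Limits.Types

noncomputable def equivPiOfIsLimitFan {J : Type} {F : J → Type u} {c : Fan F} (hc : IsLimit c) :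
    c.pt ≃ ∀ j, F j :=
  (hc.conePointUniqueUpToIso (productLimitCone.{0, u} F).isLimit).toEquiv

@[simp]
lemma equivPiOfIsLimitFan_apply {J : Type} {F : J → Type u} {c : Fan F} (hc : IsLimit c)
    (x : c.pt) (j : J) : equivPiOfIsLimitFan hc x j = c.proj j x :=
  ConcreteCategory.congr_hom
    (hc.conePointUniqueUpToIso_hom_comp (productLimitCone.{0, u} F).isLimit ⟨j⟩) x

end CategoryTheory.Limits.Types

namespace CategoryTheory.Functor

variable {C D E : Type*} [Category C] [Category D] [Category E]

lemma essImage_obj_cofanPt_of_iso (Y : C ⥤ D) (A : E ⥤ D) [HasFiniteCoproducts C]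
    [PreservesFiniteCoproducts Y] [PreservesFiniteCoproducts A] {x : E} {z : C}
    (e : A.obj x ≅ Y.obj z) {J : Type} [Finite J] {c : Cofan fun _ : J => x} (hc : IsColimit c) :
    Y.essImage (A.obj c.pt) :=
  ⟨∐ fun _ : J => z, ⟨(isColimitOfPreserves Y (coproductIsCoproduct _)).coconePointsIsoOfNatIso
    (isColimitOfPreserves A hc) (Discrete.natIso fun _ => e.symm)⟩⟩

lemma exists_preservesFiniteCoproducts_comp_iso (Y : C ⥤ D) [Y.Full] [Y.Faithful]
    (A : E ⥤ D) [PreservesFiniteCoproducts A] (hA : ∀ x, Y.essImage (A.obj x)) :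
    ∃ Ψ : E ⥤ C, PreservesFiniteCoproducts Ψ ∧ Nonempty (Ψ ⋙ Y ≅ A) := by
  let e := essImage.liftFunctorCompIso A Y hA
  have : PreservesFiniteCoproducts (essImage.liftFunctor A Y hA ⋙ Y) :=
    ⟨fun _ => preservesColimitsOfShape_of_natIso e.symm⟩
  exact ⟨_, preservesFiniteCoproducts_of_reflects_of_preserves _ Y, ⟨e⟩⟩

end CategoryTheory.Functor

section CoYon

variable {T : Type u} [SmallCategory T]

noncomputable def fullyFaithfulCoYon : (coYon T).FullyFaithful :=
  Functor.FullyFaithful.ofCompFaithful (G := ObjectProperty.ι _) Coyoneda.fullyFaithful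

instance : (coYon T).Full := fullyFaithfulCoYon.full

instance : (coYon T).Faithful := fullyFaithfulCoYon.faithful

noncomputable def LawvereAlgCat.coYonHomEquiv (G : LawvereAlgCat T) (X : T) :
    ((coYon T).obj (op X) ⟶ G) ≃ G.obj.obj X :=
  InducedCategory.homEquiv.trans coyonedaEquiv

lemma LawvereAlgCat.coYonHomEquiv_map_comp (G : LawvereAlgCat T) {X Y : T} (g : X ⟶ Y)
    (m : (coYon T).obj (op X) ⟶ G) :
    G.coYonHomEquiv Y ((coYon T).map g.op ≫ m) = G.obj.map g (G.coYonHomEquiv X m) :=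
  (coyonedaEquiv_naturality m.hom g).symm

noncomputable def LawvereAlgCat.equivPiOfIsLimit (G : LawvereAlgCat T) {J : Type} [Finite J]
    {f : J → T} {c : Fan f} (hc : IsLimit c) : G.obj.obj c.pt ≃ ∀ j, G.obj.obj (f j) :=
  haveI := G.property
  Types.equivPiOfIsLimitFan (Fan.isLimitMapConeEquiv G.obj f c (isLimitOfPreserves G.obj hc))

@[simp]
lemma LawvereAlgCat.equivPiOfIsLimit_apply (G : LawvereAlgCat T) {J : Type} [Finite J]
    {f : J → T} {c : Fan f} (hc : IsLimit c) (x : G.obj.obj c.pt) (j : J) :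
    G.equivPiOfIsLimit hc x j = G.obj.map (c.proj j) x :=
  Types.equivPiOfIsLimitFan_apply (c := Fan.mk _ _) _ x j

noncomputable def isColimitCoYonMapCoconeOp {J : Type} [Finite J] {f : J → T} {c : Fan f}
    (hc : IsLimit c) : IsColimit ((coYon T).mapCocone c.op) := by
  refine (Cofan.isColimitMapCoconeEquiv _ _ _).symm (Cofan.IsColimit.mk _
    (fun d => (d.pt.coYonHomEquiv c.pt).symm
      ((d.pt.equivPiOfIsLimit hc).symm fun j => d.pt.coYonHomEquiv (f j) (d.inj j))) ?_ ?_)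
  · intro d j
    apply (d.pt.coYonHomEquiv (f j)).injective
    change d.pt.coYonHomEquiv (f j) ((coYon T).map (c.proj j).op ≫ _) = _
    rw [LawvereAlgCat.coYonHomEquiv_map_comp, Equiv.apply_symm_apply,
      ← LawvereAlgCat.equivPiOfIsLimit_apply, Equiv.apply_symm_apply]
  · intro d m hm
    apply (d.pt.coYonHomEquiv c.pt).injective
    rw [Equiv.apply_symm_apply]
    apply (d.pt.equivPiOfIsLimit hc).injective
    rw [Equiv.apply_symm_apply]
    funext j
    rw [LawvereAlgCat.equivPiOfIsLimit_apply]
    exact (d.pt.coYonHomEquiv_map_comp (c.proj j) m).symm.trans (congrArg _ (hm j))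

instance [HasFiniteProducts T] : PreservesFiniteCoproducts (coYon T) where
  preserves n :=
    have (f : Fin n → Tᵒᵖ) : PreservesColimit (Discrete.functor f) (coYon T) :=
      preservesColimit_of_preserves_colimit_cocone
        (Fan.IsLimit.op (productIsProduct fun j => (f j).unop))
        (isColimitCoYonMapCoconeOp (productIsProduct _))
    preservesColimitsOfShape_of_discrete _

theorem exists_preservesFiniteProducts_op_comp_coYon_iso {S : Type u} [SmallCategory S]
    [HasFiniteProducts S] [HasFiniteProducts T] {s : S} {t : T}
    (hs : ∀ x : S, ∃ n : ℕ, Nonempty (x ≅ piObj fun _ : Fin n => s))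
    (A : Sᵒᵖ ⥤ LawvereAlgCat T) [PreservesFiniteCoproducts A]
    (es : A.obj (op s) ≅ (coYon T).obj (op t)) :
    ∃ Φ : S ⥤ T, PreservesFiniteProducts Φ ∧ Nonempty (Φ.obj s ≅ t) ∧
      Nonempty (Φ.op ⋙ coYon T ≅ A) := by
  have hA (x : Sᵒᵖ) : (coYon T).essImage (A.obj x) := by
    obtain ⟨n, ⟨e⟩⟩ := hs x.unop
    exact ((coYon T).essImage_obj_cofanPt_of_iso A es
      (Fan.IsLimit.op (productIsProduct fun _ : Fin n => s))).ofIso (A.mapIso e.op)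
  obtain ⟨Ψ, hΨ, ⟨e⟩⟩ := (coYon T).exists_preservesFiniteCoproducts_comp_iso A hA
  have := preservesFiniteProducts_unop Ψ
  exact ⟨Ψ.unop, inferInstance, ⟨((coYon T).preimageIso (e.app (op s) ≪≫ es)).unop.symm⟩,
    ⟨Functor.isoWhiskerRight Ψ.unopOpIso (coYon T) ≪≫ e⟩⟩

end CoYon

theorem stmt_11_general {S T : Type u} [SmallCategory S] [SmallCategory T]
    [HasFiniteProducts S] [HasFiniteProducts T] (s : S) (t : T)
    (hs : ∀ x : S, ∃ n : ℕ, Nonempty (x ≅ piObj fun _ : Fin n => s)) :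
    -- the assignment is well defined
    (∀ Φ : S ⥤ T, PreservesFiniteProducts Φ → Nonempty (Φ.obj s ≅ t) →
      PreservesFiniteCoproducts (Φ.op ⋙ coYon T) ∧
        Nonempty ((Φ.op ⋙ coYon T).obj (op s) ≅ (coYon T).obj (op t))) ∧
    -- essential surjectivity
    (∀ A : Sᵒᵖ ⥤ LawvereAlgCat T, PreservesFiniteCoproducts A →
      Nonempty (A.obj (op s) ≅ (coYon T).obj (op t)) →
      ∃ Φ : S ⥤ T, PreservesFiniteProducts Φ ∧ Nonempty (Φ.obj s ≅ t) ∧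
        Nonempty (Φ.op ⋙ coYon T ≅ A)) ∧
    -- essential injectivity
    (∀ Φ₁ Φ₂ : S ⥤ T, PreservesFiniteProducts Φ₁ → PreservesFiniteProducts Φ₂ →
      Nonempty (Φ₁.obj s ≅ t) → Nonempty (Φ₂.obj s ≅ t) →
      Nonempty (Φ₁.op ⋙ coYon T ≅ Φ₂.op ⋙ coYon T) → Nonempty (Φ₁ ≅ Φ₂)) := by
  refine ⟨fun Φ _ ⟨e⟩ => ?_, fun A _ ⟨e⟩ => ?_, fun Φ₁ Φ₂ _ _ _ _ ⟨e⟩ => ?_⟩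
  · have := preservesFiniteCoproducts_op Φ
    exact ⟨inferInstance, ⟨(coYon T).mapIso e.op.symm⟩⟩
  · exact exists_preservesFiniteProducts_op_comp_coYon_iso hs A e
  · exact ⟨(NatIso.removeOp (Functor.fullyFaithfulCancelRight (coYon T) e)).symm⟩

/-- Let `S` and `T` be Lawvere theories with distinguished objects `s` and
`t`, and let `Y_T : Tᵒᵖ ⥤ AlgCat T` be the restricted coYoneda embedding.  The assignment
`Φ ↦ Φ.op ⋙ Y_T` defines an essentially bijective correspondence between
finite-product-preserving functors `Φ : S ⥤ T` with `Φ s ≅ t` (up to natural isomorphism) and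
finite-coproduct-preserving functors `A : Sᵒᵖ ⥤ AlgCat T` with `A s` isomorphic to the
corepresentable functor `Hom_T (t, -)`, i.e. the free `T`-algebra on one generator (up to
natural isomorphism). -/
theorem stmt_11 {S T : Type u} [SmallCategory S] [SmallCategory T]
    [HasFiniteProducts S] [HasFiniteProducts T] (s : S) (t : T)
    (hs : ∀ x : S, ∃ n : ℕ, Nonempty (x ≅ piObj fun _ : Fin n => s))
    (ht : ∀ x : T, ∃ n : ℕ, Nonempty (x ≅ piObj fun _ : Fin n => t)) :
    -- the assignment is well defined
    (∀ Φ : S ⥤ T, PreservesFiniteProducts Φ → Nonempty (Φ.obj s ≅ t) →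
      PreservesFiniteCoproducts (Φ.op ⋙ coYon T) ∧
        Nonempty ((Φ.op ⋙ coYon T).obj (op s) ≅ (coYon T).obj (op t))) ∧
    -- essential surjectivity
    (∀ A : Sᵒᵖ ⥤ LawvereAlgCat T, PreservesFiniteCoproducts A →
      Nonempty (A.obj (op s) ≅ (coYon T).obj (op t)) →
      ∃ Φ : S ⥤ T, PreservesFiniteProducts Φ ∧ Nonempty (Φ.obj s ≅ t) ∧
        Nonempty (Φ.op ⋙ coYon T ≅ A)) ∧
    -- essential injectivity
    (∀ Φ₁ Φ₂ : S ⥤ T, PreservesFiniteProducts Φ₁ → PreservesFiniteProducts Φ₂ →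
      Nonempty (Φ₁.obj s ≅ t) → Nonempty (Φ₂.obj s ≅ t) →
      Nonempty (Φ₁.op ⋙ coYon T ≅ Φ₂.op ⋙ coYon T) → Nonempty (Φ₁ ≅ Φ₂)) :=
  stmt_11_general s t hs
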